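/- arXiv:1303.7349 — 2 statements merged into one kernel-verified Lean document; each statement's English description precedes it below -/
import Mathlib

section
/- For every δ > 1, every real number a ≥ 0, and every k ∈ ℕ (including k = 0), one has ∑_{i=k}^∞ (a_{δ,i})² ≥ c(δ) ((a − δ^{k/2})⁺)². -/
/-!
Write `s = √δ`, so that `δ^{i/2} = s^i`, `c(δ) = ((s - 1)/s²)²`, and `a_{δ,i}` is the length of the
part of `[s^i, s^{i+1}]` lying below `a`. If `s^k ≤ a`, pick `n` with `s^{k+n} ≤ a < s^{k+n+1}`.
For `n = 0` the single layer `i = k` already contains all of `a - s^k`. Otherwise layer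
`k + n - 1` is full, of length `s^{k+n-1}(s - 1)`, while `a - s^k < s^{k+n+1} = s^2 · s^{k+n-1}`;
so one term of the series already dominates `c(δ) (a - s^k)²`.
-/

open Real

/-- The length of `[s^i, s^(i+1)] ∩ (-∞, a]`; this is `a_{δ,i}` for `s = √δ`. -/
def layerLength (s a : ℝ) (i : ℕ) : ℝ :=
  min (max (a - s ^ i) 0) (s ^ (i + 1) - s ^ i)

section

variable {s a : ℝ} {i : ℕ}

lemma layerLength_eq_zero (hs : 1 ≤ s) (h : a ≤ s ^ i) : layerLength s a i = 0 := by
  have : s ^ i ≤ s ^ (i + 1) := pow_le_pow_right₀ hs (Nat.le_succ i)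
  rw [layerLength, max_eq_right (by linarith), min_eq_left (by linarith)]

lemma layerLength_eq_sub (h₁ : s ^ i ≤ a) (h₂ : a ≤ s ^ (i + 1)) :
    layerLength s a i = a - s ^ i := by
  rw [layerLength, max_eq_left (by linarith), min_eq_left (by linarith)]

lemma layerLength_eq_of_pow_succ_le (h : s ^ (i + 1) ≤ a) :
    layerLength s a i = s ^ (i + 1) - s ^ i :=
  min_eq_right <| le_max_of_le_left (by linarith)

lemma summable_layerLength_sq (hs : 1 < s) (a : ℝ) (k : ℕ) :
    Summable fun i => layerLength s a (k + i) ^ 2 := by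
  obtain ⟨N, hN⟩ := pow_unbounded_of_one_lt a hs
  refine summable_of_ne_finset_zero (s := Finset.range N) fun i hi => ?_
  have hNi : N ≤ k + i := by simp only [Finset.mem_range, not_lt] at hi; omega
  rw [layerLength_eq_zero hs.le (hN.le.trans (pow_le_pow_right₀ hs.le hNi)), sq, mul_zero]

lemma exists_layerLength_ge (hs : 1 < s) {k : ℕ} (hk : s ^ k ≤ a) :
    ∃ i, (s - 1) / s ^ 2 * (a - s ^ k) ≤ layerLength s a (k + i) := by
  have hs₀ : 0 < s := one_pos.trans hs
  have hsk : 0 < s ^ k := pow_pos hs₀ k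
  obtain ⟨n, hn_le, hn_lt⟩ := exists_nat_pow_near ((one_le_div hsk).2 hk) hs
  rw [le_div_iff₀ hsk, ← pow_add, add_comm] at hn_le
  rw [div_lt_iff₀ hsk, ← pow_add, add_comm, ← add_assoc] at hn_lt
  have hc : (s - 1) / s ^ 2 ≤ 1 := by
    rw [div_le_one (by positivity)]
    nlinarith
  rcases n with _ | n
  · refine ⟨0, ?_⟩
    rw [add_zero, layerLength_eq_sub hk hn_lt.le]
    exact mul_le_of_le_one_left (by linarith) hc
  · refine ⟨n, ?_⟩
    rw [← add_assoc] at hn_le hn_lt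
    rw [layerLength_eq_of_pow_succ_le hn_le]
    have hbound : a - s ^ k ≤ s ^ (k + n) * s ^ 2 := by
      rw [← pow_add]
      linarith
    calc (s - 1) / s ^ 2 * (a - s ^ k)
        ≤ (s - 1) / s ^ 2 * (s ^ (k + n) * s ^ 2) :=
          mul_le_mul_of_nonneg_left hbound (div_nonneg (by linarith) (by positivity))
      _ = s ^ (k + n + 1) - s ^ (k + n) := by field_simp; ring

theorem sq_mul_max_sub_pow_sq_le_tsum_layerLength_sq (hs : 1 < s) (a : ℝ) (k : ℕ) :
    ((s - 1) / s ^ 2) ^ 2 * max (a - s ^ k) 0 ^ 2 ≤ ∑' i, layerLength s a (k + i) ^ 2 := by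
  rcases le_total a (s ^ k) with hak | hka
  · rw [max_eq_right (by linarith)]
    simpa using tsum_nonneg fun i => sq_nonneg (layerLength s a (k + i))
  obtain ⟨i, hi⟩ := exists_layerLength_ge hs hka
  have hc : 0 ≤ (s - 1) / s ^ 2 * (a - s ^ k) :=
    mul_nonneg (div_nonneg (by linarith) (by positivity)) (by linarith)
  calc ((s - 1) / s ^ 2) ^ 2 * max (a - s ^ k) 0 ^ 2
      = ((s - 1) / s ^ 2 * (a - s ^ k)) ^ 2 := by rw [max_eq_left (by linarith), mul_pow]
    _ ≤ layerLength s a (k + i) ^ 2 := pow_le_pow_left₀ hc hi 2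
    _ ≤ ∑' j, layerLength s a (k + j) ^ 2 :=
      (summable_layerLength_sq hs a k).le_tsum i fun j _ => sq_nonneg _

end

theorem truncation_sum_lower_bound_general (δ : ℝ) (hδ : 1 < δ) (a : ℝ) (k : ℕ) :
    ((Real.sqrt δ - 1) / δ) ^ 2 * max (a - δ ^ ((k : ℝ) / 2)) 0 ^ 2
      ≤ ∑' i : ℕ,
          (min (max (a - δ ^ ((((k + i : ℕ) : ℝ)) / 2)) 0)
            (δ ^ ((((k + i : ℕ) : ℝ) + 1) / 2) - δ ^ ((((k + i : ℕ) : ℝ)) / 2))) ^ 2 := by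
  have hδ₀ : 0 ≤ δ := zero_le_one.trans hδ.le
  have hpow (m : ℕ) : δ ^ ((m : ℝ) / 2) = √δ ^ m := by
    rw [rpow_div_two_eq_sqrt _ hδ₀, rpow_natCast]
  have hpow_succ (m : ℕ) : δ ^ (((m : ℝ) + 1) / 2) = √δ ^ (m + 1) := by
    rw [← Nat.cast_succ, hpow]
  have hs : 1 < √δ := by rwa [lt_sqrt zero_le_one, one_pow]
  simp only [hpow, hpow_succ]
  have h := sq_mul_max_sub_pow_sq_le_tsum_layerLength_sq hs a k
  rw [sq_sqrt hδ₀] at h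
  exact h

/-- Lemma 2.6: for δ > 1, a ≥ 0 and k ∈ ℕ,
`∑_{i=k}^∞ (a_{δ,i})² ≥ c(δ) ((a − δ^{k/2})⁺)²` where
`a_{δ,i} = min((a − δ^{i/2})⁺, δ^{(i+1)/2} − δ^{i/2})` and `c(δ) = ((√δ − 1)/δ)²`. -/
theorem truncation_sum_lower_bound (δ : ℝ) (hδ : 1 < δ) (a : ℝ) (ha : 0 ≤ a) (k : ℕ) :
    ((Real.sqrt δ - 1) / δ) ^ 2 * max (a - δ ^ ((k : ℝ) / 2)) 0 ^ 2
      ≤ ∑' i : ℕ,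
          (min (max (a - δ ^ ((((k + i : ℕ) : ℝ)) / 2)) 0)
            (δ ^ ((((k + i : ℕ) : ℝ) + 1) / 2) - δ ^ ((((k + i : ℕ) : ℝ)) / 2))) ^ 2 :=
  truncation_sum_lower_bound_general δ hδ a k
end

section
/- Suppose the super Poincaré inequality holds for ℰ with rate β. Let n ≥ 1 be an integer and r > 0 such that β(r) · μ(ρ > n−1) ≤ 1/2. Then every f ∈ 𝒜 vanishing on the set {ρ ≤ n−1} satisfies μ(f²) ≤ 2 r ℰ(f). -/
open MeasureTheory
open scoped ENNReal

/-!
If `f` vanishes on `{ρ ≤ n - 1}`, Cauchy–Schwarz on the complementary set `S = {ρ > n - 1}` gives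
`μ(|f|)² ≤ μ(S) μ(f²)`. The defect term `β(r) μ(|f|)²` of the super Poincaré inequality is then at
most `β(r) μ(S) μ(f²) ≤ μ(f²) / 2`, and absorbing it into the left-hand side leaves
`μ(f²) ≤ 2 r ℰ(f)`.
-/

section CauchySchwarz

variable {α : Type*} [MeasurableSpace α]

theorem sq_integral_abs_le_measureReal_univ_mul_integral_sq {ν : Measure α} [IsFiniteMeasure ν]
    {f : α → ℝ} (hf : MemLp f 2 ν) :
    (∫ x, |f x| ∂ν) ^ 2 ≤ ν.real Set.univ * ∫ x, f x ^ 2 ∂ν := by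
  have holder := integral_mul_le_Lp_mul_Lq_of_nonneg Real.HolderConjugate.two_two
    (f := fun _ ↦ (1 : ℝ)) (g := fun x ↦ |f x|) (.of_forall fun _ ↦ zero_le_one)
    (.of_forall fun x ↦ abs_nonneg (f x)) (by simpa using memLp_const (μ := ν) (p := 2) 1)
    (by rw [ENNReal.ofReal_ofNat]; exact hf.abs)
  simp only [one_mul, Real.rpow_two, one_pow, integral_const, smul_eq_mul, mul_one, sq_abs,
    ← Real.sqrt_eq_rpow] at holder
  rwa [← Real.sqrt_mul measureReal_nonneg, Real.le_sqrt (by positivity) (by positivity)] at holder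

theorem sq_integral_abs_le_measureReal_mul_integral_sq {μ : Measure α} {f : α → ℝ} {s : Set α}
    (hμs : μ s ≠ ∞) (hf : MemLp f 2 μ) (hfs : ∀ x ∉ s, f x = 0) :
    (∫ x, |f x| ∂μ) ^ 2 ≤ μ.real s * ∫ x, f x ^ 2 ∂μ := by
  have : IsFiniteMeasure (μ.restrict s) := isFiniteMeasure_restrict.mpr hμs
  rw [← setIntegral_eq_integral_of_forall_compl_eq_zero (f := fun x ↦ |f x|) (μ := μ)
      fun x hx ↦ by simp [hfs x hx],
    ← setIntegral_eq_integral_of_forall_compl_eq_zero (f := fun x ↦ f x ^ 2) (μ := μ)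
      fun x hx ↦ by simp [hfs x hx],
    ← measureReal_restrict_apply_univ]
  exact sq_integral_abs_le_measureReal_univ_mul_integral_sq (hf.restrict s)

end CauchySchwarz

theorem superPoincare_vanishing_near_origin_general
    {E : Type*} [MetricSpace E] [MeasurableSpace E]
    (μ : MeasureTheory.Measure E) [MeasureTheory.IsProbabilityMeasure μ]
    (Γ : (E → ℝ) → E → ℝ)
    (A : Set (E → ℝ))
    (hA : ∀ f, f ∈ A ↔ Measurable f ∧ (∃ M, ∀ x, |f x| ≤ M) ∧ ∃ M, ∀ x, Γ f x ≤ M)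
    (En : (E → ℝ) → ℝ)
    (o : E)
    (β : ℝ → ℝ)
    (hβ_pos : ∀ r, 0 < r → 0 < β r)
    (hSP : ∀ r, 0 < r → ∀ f ∈ A,
      ∫ x, f x ^ 2 ∂μ ≤ r * En f + β r * (∫ x, |f x| ∂μ) ^ 2)
    :
    ∀ n : ℕ, 1 ≤ n → ∀ r : ℝ, 0 < r →
    β r * (μ {x | (n : ℝ) - 1 < dist o x}).toReal ≤ 1 / 2 →
    ∀ f ∈ A, (∀ x, dist o x ≤ (n : ℝ) - 1 → f x = 0) →
      ∫ x, f x ^ 2 ∂μ ≤ 2 * r * En f := by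
  intro n _ r hr hsmall f hfA hf_zero
  obtain ⟨hf_meas, ⟨M, hM⟩, -⟩ := (hA f).mp hfA
  have hf_L2 : MemLp f 2 μ :=
    (memLp_top_of_bound hf_meas.aestronglyMeasurable M (.of_forall hM)).mono_exponent le_top
  have hCS := sq_integral_abs_le_measureReal_mul_integral_sq (measure_ne_top μ _) hf_L2
    fun x hx ↦ hf_zero x (not_lt.mp hx)
  have hdefect : β r * (∫ x, |f x| ∂μ) ^ 2 ≤ 1 / 2 * ∫ x, f x ^ 2 ∂μ :=
    calc β r * (∫ x, |f x| ∂μ) ^ 2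
        ≤ β r * μ.real {x | (n : ℝ) - 1 < dist o x} * ∫ x, f x ^ 2 ∂μ := by
          rw [mul_assoc]; exact mul_le_mul_of_nonneg_left hCS (hβ_pos r hr).le
      _ ≤ 1 / 2 * ∫ x, f x ^ 2 ∂μ :=
          mul_le_mul_of_nonneg_right hsmall (integral_nonneg fun x ↦ sq_nonneg _)
  linarith [hSP r hr f hfA]

/-- Equation (2.6): the super Poincaré inequality localized to functions vanishing near o. -/
theorem superPoincare_vanishing_near_origin
    {E : Type*} [MetricSpace E] [MeasurableSpace E] [BorelSpace E] [Nonempty E]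
    (μ : MeasureTheory.Measure E) [MeasureTheory.IsProbabilityMeasure μ]
    (q : E → E → ℝ)
    (hq_nonneg : ∀ x y, 0 ≤ q x y)
    (hq_diag : ∀ x, q x x = 0)
    (hq_meas : Measurable (Function.uncurry q))
    (l : ℝ) (hl_nonneg : 0 ≤ l)
    (hl : ∀ x, ∫ y, min 1 (dist x y ^ 2) * q x y ∂μ ≤ l)
    (Γ : (E → ℝ) → E → ℝ)
    (hΓ : ∀ f x, Γ f x = ∫ y, (f x - f y) ^ 2 * q x y ∂μ)
    (A : Set (E → ℝ))
    (hA : ∀ f, f ∈ A ↔ Measurable f ∧ (∃ M, ∀ x, |f x| ≤ M) ∧ ∃ M, ∀ x, Γ f x ≤ M)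
    (En : (E → ℝ) → ℝ)
    (hEn : ∀ f, En f = ∫ x, Γ f x ∂μ)
    (o : E)
    (β : ℝ → ℝ)
    (hβ_pos : ∀ r, 0 < r → 0 < β r)
    (hβ_dec : ∀ r s, 0 < r → r ≤ s → β s ≤ β r)
    (hSP : ∀ r, 0 < r → ∀ f ∈ A,
      ∫ x, f x ^ 2 ∂μ ≤ r * En f + β r * (∫ x, |f x| ∂μ) ^ 2)
    :
    ∀ n : ℕ, 1 ≤ n → ∀ r : ℝ, 0 < r →
    β r * (μ {x | (n : ℝ) - 1 < dist o x}).toReal ≤ 1 / 2 →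
    ∀ f ∈ A, (∀ x, dist o x ≤ (n : ℝ) - 1 → f x = 0) →
      ∫ x, f x ^ 2 ∂μ ≤ 2 * r * En f :=
  superPoincare_vanishing_near_origin_general μ Γ A hA En o β hβ_pos hSP
end
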